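/- arXiv:quant-ph/0311008 — 9 statements merged into one kernel-verified Lean document; each statement's English description precedes it below -/
import Mathlib

section
/- For every n ≥ 1 and every unitary matrix U of size 2^n × 2^n over the complex numbers, there exists a finite sequence V_1, V_2, …, V_k of two-level unitary matrices with k ≤ 2^(n-1) · (2^n − 1) such that U = V_1 · V_2 · ⋯ · V_k. -/
/-- A matrix `M` of size `N × N` over `ℂ` is *two-level* if there are indices `c < r`
such that `M` agrees with the identity matrix at every entry except possibly the four
entries `(c,c), (c,r), (r,c), (r,r)`. -/
def IsTwoLevel {N : ℕ} (M : Matrix (Fin N) (Fin N) ℂ) : Prop :=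
  ∃ c r : Fin N, c < r ∧
    ∀ i j : Fin N, ¬((i = c ∨ i = r) ∧ (j = c ∨ j = r)) →
      M i j = (1 : Matrix (Fin N) (Fin N) ℂ) i j

open Matrix Complex

noncomputable section

/-- two-level matrix built from a 2×2 block at rows/cols c,r -/
def tl {N : ℕ} (c r : Fin N) (A : Matrix (Fin 2) (Fin 2) ℂ) : Matrix (Fin N) (Fin N) ℂ :=
  Matrix.of fun i j =>
    if i = c then (if j = c then A 0 0 else if j = r then A 0 1 else 0)
    else if i = r then (if j = c then A 1 0 else if j = r then A 1 1 else 0)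
    else if j = i then 1 else 0

lemma sum_if_two {n : ℕ} {c r : Fin n} (h : c ≠ r) (x y : ℂ) (f : Fin n → ℂ) :
    (∑ k, (if k = c then x else if k = r then y else 0) * f k) = x * f c + y * f r := by
  rw [← Finset.sum_subset (Finset.subset_univ {c, r})]
  · rw [Finset.sum_pair h]
    simp [h, h.symm]
  · intro k _ hk
    simp only [Finset.mem_insert, Finset.mem_singleton, not_or] at hk
    simp [hk.1, hk.2]

lemma tl_mul_apply {N : ℕ} {c r : Fin N} (h : c ≠ r) (A : Matrix (Fin 2) (Fin 2) ℂ)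
    (M : Matrix (Fin N) (Fin N) ℂ) (i j : Fin N) :
    (tl c r A * M) i j =
      if i = c then A 0 0 * M c j + A 0 1 * M r j
      else if i = r then A 1 0 * M c j + A 1 1 * M r j
      else M i j := by
  rw [Matrix.mul_apply]
  by_cases hic : i = c
  · subst hic
    simp only [tl, Matrix.of_apply, if_pos rfl, if_true, eq_self_iff_true]
    rw [sum_if_two h]
  · by_cases hir : i = r
    · subst hir
      simp only [tl, Matrix.of_apply, if_neg h.symm, if_pos rfl, if_true, eq_self_iff_true,
        if_neg hic]
      rw [sum_if_two h]
    · simp only [tl, Matrix.of_apply, if_neg hic, if_neg hir, ite_mul, one_mul, zero_mul]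
      simp [Finset.sum_ite_eq' Finset.univ i fun k => M k j]

lemma tl_one {N : ℕ} {c r : Fin N} (h : c ≠ r) : tl c r 1 = 1 := by
  ext i j
  simp only [tl, Matrix.of_apply, Matrix.one_apply]
  by_cases hic : i = c <;> by_cases hir : i = r <;>
    by_cases hjc : j = c <;> by_cases hjr : j = r <;>
      simp_all <;> simp_all [eq_comm]

lemma tl_mul {N : ℕ} {c r : Fin N} (h : c ≠ r) (A B : Matrix (Fin 2) (Fin 2) ℂ) :
    tl c r A * tl c r B = tl c r (A * B) := by
  ext i j
  rw [tl_mul_apply h]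
  have h' : r ≠ c := fun e => h e.symm
  simp only [tl, Matrix.of_apply, Matrix.mul_apply, Fin.sum_univ_two]
  by_cases hic : i = c <;> by_cases hir : i = r <;>
    by_cases hjc : j = c <;> by_cases hjr : j = r <;>
      simp_all

lemma star_tl {N : ℕ} {c r : Fin N} (h : c ≠ r) (A : Matrix (Fin 2) (Fin 2) ℂ) :
    star (tl c r A) = tl c r (star A) := by
  ext i j
  rw [Matrix.star_apply]
  by_cases hic : i = c <;> by_cases hir : i = r <;>
    by_cases hjc : j = c <;> by_cases hjr : j = r <;>
      simp_all [tl, Matrix.star_apply, Matrix.conjTranspose_apply, eq_comm]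

lemma tl_mem_unitary {N : ℕ} {c r : Fin N} (h : c ≠ r) {A : Matrix (Fin 2) (Fin 2) ℂ}
    (hA : A ∈ Matrix.unitaryGroup (Fin 2) ℂ) :
    tl c r A ∈ Matrix.unitaryGroup (Fin N) ℂ := by
  rw [Matrix.mem_unitaryGroup_iff]
  rw [star_tl h, tl_mul h, Matrix.mem_unitaryGroup_iff.mp hA, tl_one h]

lemma isTwoLevel_tl {N : ℕ} {c r : Fin N} (h : c < r) (A : Matrix (Fin 2) (Fin 2) ℂ) :
    IsTwoLevel (tl c r A) := by
  refine ⟨c, r, h, fun i j hij => ?_⟩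
  by_cases hic : i = c
  · have hj : j ≠ c ∧ j ≠ r := by tauto
    subst hic
    have hji : j ≠ i := hj.1
    simp [tl, hj.1, hj.2, Matrix.one_apply_ne' hji, hji.symm]
  · by_cases hir : i = r
    · have hj : j ≠ c ∧ j ≠ r := by tauto
      subst hir
      have hji : j ≠ i := hj.2
      simp [tl, hj.1, hj.2, hic, Matrix.one_apply_ne' hji, hji.symm]
    · simp only [tl, Matrix.of_apply, if_neg hic, if_neg hir, Matrix.one_apply]
      by_cases hji : j = i
      · subst hji; simp
      · simp [hji, Ne.symm hji]

lemma isTwoLevel_one {N : ℕ} (h : 2 ≤ N) : IsTwoLevel (1 : Matrix (Fin N) (Fin N) ℂ) :=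
  ⟨⟨0, by omega⟩, ⟨1, by omega⟩, by simp [Fin.lt_def], fun i j _ => rfl⟩

lemma isTwoLevel_star {N : ℕ} {M : Matrix (Fin N) (Fin N) ℂ} (hM : IsTwoLevel M) :
    IsTwoLevel (star M) := by
  obtain ⟨c, r, hcr, hid⟩ := hM
  refine ⟨c, r, hcr, fun i j hij => ?_⟩
  have : M j i = (1 : Matrix (Fin N) (Fin N) ℂ) j i := hid j i (by tauto)
  rw [Matrix.star_apply, this]
  by_cases hji : j = i
  · subst hji; simp [Matrix.one_apply]
  · simp [Matrix.one_apply, hji, Ne.symm hji]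

def emb {m : ℕ} (M : Matrix (Fin m) (Fin m) ℂ) : Matrix (Fin (m + 1)) (Fin (m + 1)) ℂ :=
  Matrix.of fun i j =>
    Fin.cases (Fin.cases 1 (fun _ => 0) j) (fun i' => Fin.cases 0 (fun j' => M i' j') j) i

@[simp] lemma emb_zero_zero {m : ℕ} (M : Matrix (Fin m) (Fin m) ℂ) : emb M 0 0 = 1 := rfl
@[simp] lemma emb_zero_succ {m : ℕ} (M : Matrix (Fin m) (Fin m) ℂ) (j : Fin m) :
    emb M 0 j.succ = 0 := rfl
@[simp] lemma emb_succ_zero {m : ℕ} (M : Matrix (Fin m) (Fin m) ℂ) (i : Fin m) :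
    emb M i.succ 0 = 0 := rfl
@[simp] lemma emb_succ_succ {m : ℕ} (M : Matrix (Fin m) (Fin m) ℂ) (i j : Fin m) :
    emb M i.succ j.succ = M i j := rfl

lemma emb_one {m : ℕ} : emb (1 : Matrix (Fin m) (Fin m) ℂ) = 1 := by
  ext i j
  induction i using Fin.cases <;> induction j using Fin.cases <;>
    simp [Matrix.one_apply, Fin.succ_ne_zero, (Fin.succ_ne_zero _).symm, Fin.succ_inj]

lemma emb_mul {m : ℕ} (A B : Matrix (Fin m) (Fin m) ℂ) :
    emb (A * B) = emb A * emb B := by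
  ext i j
  induction i using Fin.cases <;> induction j using Fin.cases <;>
    simp [Matrix.mul_apply, Fin.sum_univ_succ]

lemma star_emb {m : ℕ} (M : Matrix (Fin m) (Fin m) ℂ) : star (emb M) = emb (star M) := by
  ext i j
  induction i using Fin.cases <;> induction j using Fin.cases <;>
    simp [Matrix.star_apply]

lemma emb_inj {m : ℕ} {A B : Matrix (Fin m) (Fin m) ℂ} (h : emb A = emb B) : A = B := by
  ext i j
  have := congrFun (congrFun h i.succ) j.succ
  simpa using this

lemma emb_mem_unitary {m : ℕ} {A : Matrix (Fin m) (Fin m) ℂ}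
    (hA : A ∈ Matrix.unitaryGroup (Fin m) ℂ) :
    emb A ∈ Matrix.unitaryGroup (Fin (m + 1)) ℂ := by
  rw [Matrix.mem_unitaryGroup_iff]
  rw [star_emb, ← emb_mul, Matrix.mem_unitaryGroup_iff.mp hA, emb_one]

lemma isTwoLevel_emb {m : ℕ} {A : Matrix (Fin m) (Fin m) ℂ} (hA : IsTwoLevel A) :
    IsTwoLevel (emb A) := by
  obtain ⟨c, r, hcr, hid⟩ := hA
  refine ⟨c.succ, r.succ, Fin.succ_lt_succ_iff.mpr hcr, fun i j hij => ?_⟩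
  induction i using Fin.cases with
  | zero =>
    induction j using Fin.cases with
    | zero => simp [Matrix.one_apply]
    | succ j' => simp [Matrix.one_apply, (Fin.succ_ne_zero j').symm]
  | succ i' =>
    induction j using Fin.cases with
    | zero => simp [Matrix.one_apply, Fin.succ_ne_zero]
    | succ j' =>
      have h' : ¬((i' = c ∨ i' = r) ∧ (j' = c ∨ j' = r)) := by
        simpa [Fin.succ_inj] using hij
      have := hid i' j' h'
      simp only [emb_succ_succ, this, Matrix.one_apply, Fin.succ_inj]

lemma prod_map_emb {m : ℕ} (L : List (Matrix (Fin m) (Fin m) ℂ)) :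
    (L.map emb).prod = emb L.prod := by
  induction L with
  | nil => simp [emb_one]
  | cons a l ih => rw [List.map_cons, List.prod_cons, List.prod_cons, emb_mul, ih]

lemma star_list_prod {m : ℕ} (L : List (Matrix (Fin m) (Fin m) ℂ)) :
    star L.prod = (L.reverse.map star).prod := by
  induction L with
  | nil => simp
  | cons a l ih =>
    rw [List.prod_cons, Matrix.star_mul, ih, List.reverse_cons, List.map_append, List.prod_append]
    simp

lemma givens_unitary (a b : ℂ) (nr : ℝ) (hnr : (nr : ℂ) ≠ 0)
    (hkey : (starRingEnd ℂ) a * a + (starRingEnd ℂ) b * b = (nr : ℂ) * nr) :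
    !![(starRingEnd ℂ) a / nr, (starRingEnd ℂ) b / nr; -b / nr, a / nr] ∈
      Matrix.unitaryGroup (Fin 2) ℂ := by
  rw [Matrix.mem_unitaryGroup_iff]
  ext i j
  fin_cases i <;> fin_cases j
  all_goals
    simp only [Matrix.mul_apply, Fin.sum_univ_two, Matrix.conjTranspose_apply,
        Matrix.cons_val', Matrix.cons_val_zero, Matrix.cons_val_one, Matrix.head_cons,
        Matrix.head_fin_const, Matrix.one_apply, Matrix.cons_val_fin_one,
        Matrix.empty_val', map_div₀, map_neg, Complex.conj_conj, Complex.conj_ofReal,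
        Matrix.star_apply, Fin.zero_eta, Fin.mk_one, Fin.isValue, RCLike.star_def, Matrix.of_apply, if_true, if_false, zero_ne_one, one_ne_zero]
    field_simp
    first
    | ring1
    | linear_combination hkey
    | linear_combination (nr : ℂ) * hkey

lemma elim_key (m : ℕ) (U : Matrix (Fin (m + 1)) (Fin (m + 1)) ℂ) :
    ∀ t, t ≤ m → ∃ L : List (Matrix (Fin (m + 1)) (Fin (m + 1)) ℂ),
      L.length = t ∧
      (∀ V ∈ L, IsTwoLevel V ∧ V ∈ Matrix.unitaryGroup (Fin (m + 1)) ℂ) ∧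
      (∀ i : Fin (m + 1), m + 1 - t ≤ i.val → (L.prod * U) i 0 = 0) ∧
      (0 < t → ∃ x : ℝ, 0 ≤ x ∧ (L.prod * U) 0 0 = x) := by
  intro t
  induction t with
  | zero =>
    intro _
    refine ⟨[], rfl, by simp, fun i hi => absurd i.isLt (by omega), by simp⟩
  | succ t ih =>
    intro ht
    obtain ⟨L, hlen, hprops, hzero, _⟩ := ih (Nat.le_of_succ_le ht)
    set W := L.prod * U with hW
    have hpval : m - t < m + 1 := by omega
    set p : Fin (m + 1) := ⟨m - t, hpval⟩ with hp
    have hp0 : (0 : Fin (m + 1)) ≠ p := by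
      intro e
      have h := congrArg Fin.val e
      simp only [hp, Fin.val_zero] at h
      omega
    set a := W 0 0 with ha
    set b := W p 0 with hb
    by_cases hab : a = 0 ∧ b = 0
    · refine ⟨(1 : Matrix (Fin (m + 1)) (Fin (m + 1)) ℂ) :: L, by simp [hlen], ?_, ?_, ?_⟩
      · intro V hV
        rcases List.mem_cons.mp hV with rfl | hV
        · exact ⟨isTwoLevel_one (by omega), Submonoid.one_mem _⟩
        · exact hprops V hV
      · intro i hi
        rw [List.prod_cons, one_mul]
        rcases eq_or_ne i p with rfl | hip
        · exact hab.2
        · refine hzero i ?_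
          have : i.val ≠ m - t := fun e => hip (Fin.ext e)
          omega
      · intro _
        rw [List.prod_cons, one_mul]
        refine ⟨0, le_refl 0, ?_⟩
        have e : (L.prod * U) 0 0 = a := rfl
        rw [e, hab.1]
        simp
    · set nr := Real.sqrt (normSq a + normSq b) with hnr
      have hsum : 0 < normSq a + normSq b := by
        rcases not_and_or.mp hab with h | h
        · have := normSq_pos.mpr h
          have := normSq_nonneg b
          linarith
        · have := normSq_pos.mpr h
          have := normSq_nonneg a
          linarith
      have hnrpos : 0 < nr := Real.sqrt_pos.mpr hsum
      have hnrsq : nr * nr = normSq a + normSq b := Real.mul_self_sqrt hsum.le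
      have hnrC : (nr : ℂ) ≠ 0 := by
        simpa using hnrpos.ne'
      set A2 : Matrix (Fin 2) (Fin 2) ℂ :=
        !![(starRingEnd ℂ) a / nr, (starRingEnd ℂ) b / nr; -b / nr, a / nr] with hA2
      have hkey : (starRingEnd ℂ) a * a + (starRingEnd ℂ) b * b = (nr : ℂ) * nr := by
        rw [mul_comm ((starRingEnd ℂ) a) a, mul_comm ((starRingEnd ℂ) b) b,
          Complex.mul_conj, Complex.mul_conj, ← Complex.ofReal_mul, hnrsq,
          Complex.ofReal_add]
      have hA2u : A2 ∈ Matrix.unitaryGroup (Fin 2) ℂ := givens_unitary a b nr hnrC hkey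
      have hlt : (0 : Fin (m + 1)) < p := by
        simp only [Fin.lt_def, hp, Fin.val_zero]
        omega
      have e00 : A2 0 0 = (starRingEnd ℂ) a / nr := by simp [hA2]
      have e01 : A2 0 1 = (starRingEnd ℂ) b / nr := by simp [hA2]
      have e10 : A2 1 0 = -b / nr := by simp [hA2]
      have e11 : A2 1 1 = a / nr := by simp [hA2]
      have ea : (L.prod * U) 0 0 = a := rfl
      have eb : (L.prod * U) p 0 = b := rfl
      refine ⟨tl 0 p A2 :: L, by simp [hlen], ?_, ?_, ?_⟩
      · intro V hV
        rcases List.mem_cons.mp hV with rfl | hV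
        · exact ⟨isTwoLevel_tl hlt A2, tl_mem_unitary hp0 hA2u⟩
        · exact hprops V hV
      · intro i hi
        rw [List.prod_cons, mul_assoc, tl_mul_apply hp0]
        have hi0 : i ≠ 0 := by
          intro e
          subst e
          have h0 : m + 1 - (t + 1) ≤ 0 := by simpa using hi
          omega
        rw [if_neg hi0]
        rcases eq_or_ne i p with rfl | hip
        · rw [if_pos rfl, e10, e11, ea, eb]
          field_simp
          ring
        · rw [if_neg hip]
          refine hzero i ?_
          have hv : i.val ≠ m - t := by
            intro e
            exact hip (Fin.ext (by simpa [hp] using e))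
          have hge : m + 1 - (t + 1) ≤ i.val := hi
          omega
      · intro _
        rw [List.prod_cons, mul_assoc, tl_mul_apply hp0, if_pos rfl, e00, e01, ea, eb]
        refine ⟨nr, hnrpos.le, ?_⟩
        field_simp
        linear_combination hkey

lemma list_prod_unitary {N : ℕ} {L : List (Matrix (Fin N) (Fin N) ℂ)}
    (h : ∀ V ∈ L, IsTwoLevel V ∧ V ∈ Matrix.unitaryGroup (Fin N) ℂ) :
    L.prod ∈ Matrix.unitaryGroup (Fin N) ℂ :=
  Submonoid.list_prod_mem _ fun V hV => (h V hV).2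

lemma elim (m : ℕ) (hm : 1 ≤ m) (U : Matrix (Fin (m + 1)) (Fin (m + 1)) ℂ)
    (hU : U ∈ Matrix.unitaryGroup (Fin (m + 1)) ℂ) :
    ∃ L : List (Matrix (Fin (m + 1)) (Fin (m + 1)) ℂ),
      L.length = m ∧
      (∀ V ∈ L, IsTwoLevel V ∧ V ∈ Matrix.unitaryGroup (Fin (m + 1)) ℂ) ∧
      ∃ U' : Matrix (Fin m) (Fin m) ℂ,
        U' ∈ Matrix.unitaryGroup (Fin m) ℂ ∧ L.prod * U = emb U' := by
  obtain ⟨L, hlen, hprops, hzero, hx⟩ := elim_key m U m le_rfl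
  set W := L.prod * U with hWdef
  have hWu : W ∈ Matrix.unitaryGroup (Fin (m + 1)) ℂ :=
    Submonoid.mul_mem _ (list_prod_unitary hprops) hU
  obtain ⟨x, hx0, hxe⟩ := hx hm
  -- zeros below in column 0
  have hcol : ∀ i : Fin m, W i.succ 0 = 0 := fun i =>
    hzero i.succ (by simp [Fin.val_succ])
  -- W 0 0 = 1
  have hsWW : star W * W = 1 := Matrix.mem_unitaryGroup_iff'.mp hWu
  have h00 : ((star W * W) 0 0 : ℂ) = 1 := by rw [hsWW]; simp
  rw [Matrix.mul_apply, Fin.sum_univ_succ] at h00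
  simp only [Matrix.star_apply, hcol, mul_zero, Finset.sum_const_zero, add_zero,
    RCLike.star_def] at h00
  have hW00 : W 0 0 = 1 := by
    rw [hxe] at h00 ⊢
    have hx2 : (x : ℂ) * (x : ℂ) = 1 := by
      rw [← h00]
      simp [Complex.conj_ofReal, mul_comm]
    have : x * x = 1 := by exact_mod_cast hx2
    have : x = 1 := by nlinarith
    rw [this]
    simp
  -- row zeros
  have hWWs : W * star W = 1 := Matrix.mem_unitaryGroup_iff.mp hWu
  have h00' : ((W * star W) 0 0 : ℂ) = 1 := by rw [hWWs]; simp
  rw [Matrix.mul_apply, Fin.sum_univ_succ] at h00'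
  simp only [Matrix.star_apply, RCLike.star_def, hW00, _root_.map_one, mul_one] at h00'
  have hsum0 : (∑ j : Fin m, (Complex.normSq (W 0 j.succ) : ℂ)) = 0 := by
    have := h00'
    simp only [Complex.mul_conj, Complex.normSq_one, Complex.ofReal_one] at this
    linear_combination this
  have hrow : ∀ j : Fin m, W 0 j.succ = 0 := by
    rw [← Complex.ofReal_sum, Complex.ofReal_eq_zero] at hsum0
    intro j
    have hj := (Finset.sum_eq_zero_iff_of_nonneg
      (fun k _ => Complex.normSq_nonneg (W 0 k.succ))).mp hsum0 j (Finset.mem_univ j)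
    exact Complex.normSq_eq_zero.mp hj
  set U' : Matrix (Fin m) (Fin m) ℂ := Matrix.of fun i j => W i.succ j.succ with hU'def
  have hembU' : emb U' = W := by
    ext i j
    induction i using Fin.cases with
    | zero =>
      induction j using Fin.cases with
      | zero => rw [emb_zero_zero, hW00]
      | succ j' => rw [emb_zero_succ, hrow j']
    | succ i' =>
      induction j using Fin.cases with
      | zero => rw [emb_succ_zero, hcol i']
      | succ j' => rfl
  refine ⟨L, hlen, hprops, U', ?_, hembU'.symm⟩
  rw [Matrix.mem_unitaryGroup_iff]
  apply emb_inj
  rw [emb_mul, ← star_emb, hembU', emb_one, hWWs]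

lemma star_mem_unitary {N : ℕ} {V : Matrix (Fin N) (Fin N) ℂ}
    (h : V ∈ Matrix.unitaryGroup (Fin N) ℂ) :
    star V ∈ Matrix.unitaryGroup (Fin N) ℂ := by
  rw [Matrix.mem_unitaryGroup_iff, star_star]
  exact Matrix.mem_unitaryGroup_iff'.mp h

lemma main_decomp : ∀ m (U : Matrix (Fin (m + 2)) (Fin (m + 2)) ℂ),
    U ∈ Matrix.unitaryGroup (Fin (m + 2)) ℂ →
    ∃ L : List (Matrix (Fin (m + 2)) (Fin (m + 2)) ℂ),
      L.length ≤ (m + 2) * (m + 1) / 2 ∧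
      (∀ V ∈ L, IsTwoLevel V ∧ V ∈ Matrix.unitaryGroup (Fin (m + 2)) ℂ) ∧
      U = L.prod := by
  intro m
  induction m with
  | zero =>
    intro U hU
    refine ⟨[U], by simp, ?_, by simp⟩
    intro V hV
    rcases List.mem_singleton.mp hV with rfl
    refine ⟨⟨0, 1, by decide, fun i j hij => ?_⟩, hU⟩
    exact absurd ⟨by fin_cases i <;> simp, by fin_cases j <;> simp⟩ hij
  | succ m ih =>
    intro U hU
    obtain ⟨L₁, hlen₁, hprops₁, U', hU', hW⟩ := elim (m + 2) (by omega) U hU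
    obtain ⟨L₂, hlen₂, hprops₂, hU'eq⟩ := ih U' hU'
    have hP : L₁.prod ∈ Matrix.unitaryGroup (Fin (m + 3)) ℂ := list_prod_unitary hprops₁
    have hUeq : U = (L₁.reverse.map star).prod * emb U' := by
      rw [← star_list_prod, ← hW, ← mul_assoc, Matrix.mem_unitaryGroup_iff'.mp hP, one_mul]
    refine ⟨L₁.reverse.map star ++ L₂.map emb, ?_, ?_, ?_⟩
    · have e : (m + 3) * (m + 2) = (m + 2) * (m + 1) + (m + 2) * 2 := by ring
      have key : (m + 3) * (m + 2) / 2 = (m + 2) * (m + 1) / 2 + (m + 2) := by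
        rw [e, Nat.add_mul_div_right _ _ (by norm_num : 0 < 2)]
      have e2 : (m + 1 + 2) * (m + 1 + 1) = (m + 3) * (m + 2) := by ring
      simp only [List.length_append, List.length_map, List.length_reverse, hlen₁, e2]
      omega
    · intro V hV
      rcases List.mem_append.mp hV with hV | hV
      · obtain ⟨V₀, hV₀, rfl⟩ := List.mem_map.mp hV
        have h₀ := hprops₁ V₀ (List.mem_reverse.mp hV₀)
        exact ⟨isTwoLevel_star h₀.1, star_mem_unitary h₀.2⟩
      · obtain ⟨V₀, hV₀, rfl⟩ := List.mem_map.mp hV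
        have h₀ := hprops₂ V₀ hV₀
        exact ⟨isTwoLevel_emb h₀.1, emb_mem_unitary h₀.2⟩
    · rw [List.prod_append, prod_map_emb, ← hU'eq, hUeq]

lemma final_any (N : ℕ) (h : 2 ≤ N) (U : Matrix (Fin N) (Fin N) ℂ)
    (hU : U ∈ Matrix.unitaryGroup (Fin N) ℂ) :
    ∃ L : List (Matrix (Fin N) (Fin N) ℂ),
      L.length ≤ N * (N - 1) / 2 ∧
      (∀ V ∈ L, IsTwoLevel V ∧ V ∈ Matrix.unitaryGroup (Fin N) ℂ) ∧
      U = L.prod := by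
  obtain ⟨m, rfl⟩ : ∃ m, N = m + 2 := ⟨N - 2, by omega⟩
  simpa using main_decomp m U hU

end

/-- Every `2^n × 2^n` unitary matrix is a product of at most `2^(n-1) * (2^n - 1)`
two-level unitary matrices. -/
theorem two_level_decomposition (n : ℕ) (hn : 1 ≤ n)
    (U : Matrix (Fin (2 ^ n)) (Fin (2 ^ n)) ℂ)
    (hU : U ∈ Matrix.unitaryGroup (Fin (2 ^ n)) ℂ) :
    ∃ (k : ℕ) (V : Fin k → Matrix (Fin (2 ^ n)) (Fin (2 ^ n)) ℂ),
      k ≤ 2 ^ (n - 1) * (2 ^ n - 1) ∧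
      (∀ i : Fin k, IsTwoLevel (V i) ∧ V i ∈ Matrix.unitaryGroup (Fin (2 ^ n)) ℂ) ∧
      U = (List.ofFn V).prod := by
  have h2 : 2 ≤ 2 ^ n := by
    calc 2 = 2 ^ 1 := rfl
    _ ≤ 2 ^ n := Nat.pow_le_pow_right (by norm_num) hn
  obtain ⟨L, hlen, hprops, hprod⟩ := final_any (2 ^ n) h2 U hU
  have hsplit : 2 ^ n = 2 * 2 ^ (n - 1) := by
    rw [← pow_succ']
    congr 1
    omega
  have hbound : 2 ^ n * (2 ^ n - 1) / 2 = 2 ^ (n - 1) * (2 ^ n - 1) := by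
    rw [hsplit, mul_assoc, Nat.mul_div_cancel_left _ (by norm_num : 0 < 2)]
  refine ⟨L.length, L.get, by rw [← hbound]; exact hlen, ?_, by rw [List.ofFn_get]; exact hprod⟩
  intro i
  exact hprops (L.get i) (L.get_mem i)
end

section
/- Let N ≥ 2, let c < r be indices in {0, …, N−1}, and let M be an N × N complex matrix that agrees with the identity matrix at every entry except possibly (c,c), (c,r), (r,c), (r,r). Then M is unitary if and only if its component matrix, i.e., the 2 × 2 matrix [[M[c,c], M[c,r]], [M[r,c], M[r,r]]], is unitary. -/
/-!
Matrices that agree with the identity outside a block `s × s` are closed under products and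
conjugate transposes, and restricting them to the block is multiplicative, since a row indexed in
`s` vanishes outside `s`. So for such `M` the identity `M * Mᴴ = 1` holds off the block
automatically, and on the block it reads `A * Aᴴ = 1` for the block `A` of `M`.
-/

namespace Matrix

variable {ι n α : Type*} [DecidableEq n]

def IsOneOffBlock [Zero α] [One α] (e : ι → n) (M : Matrix n n α) : Prop :=
  ∀ i j, (i ∉ Set.range e ∨ j ∉ Set.range e) → M i j = (1 : Matrix n n α) i j

namespace IsOneOffBlock

variable {e : ι → n}

theorem one [Zero α] [One α] : IsOneOffBlock e (1 : Matrix n n α) :=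
  fun _ _ _ ↦ rfl

theorem conjTranspose [NonAssocSemiring α] [StarRing α] {M : Matrix n n α}
    (hM : IsOneOffBlock e M) : IsOneOffBlock e Mᴴ := by
  intro i j hij
  rw [conjTranspose_apply, hM j i hij.symm, ← conjTranspose_apply, conjTranspose_one]

theorem eq_iff_submatrix_eq [Zero α] [One α] {M N : Matrix n n α} (hM : IsOneOffBlock e M)
    (hN : IsOneOffBlock e N) : M = N ↔ M.submatrix e e = N.submatrix e e := by
  refine ⟨fun h ↦ h ▸ rfl, fun h ↦ ?_⟩
  ext i j
  by_cases hij : i ∈ Set.range e ∧ j ∈ Set.range e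
  · obtain ⟨⟨a, rfl⟩, ⟨b, rfl⟩⟩ := hij
    exact congrFun (congrFun h a) b
  · rw [not_and_or] at hij
    rw [hM i j hij, hN i j hij]

variable [Fintype n]

theorem mul [NonAssocSemiring α] {M N : Matrix n n α} (hM : IsOneOffBlock e M)
    (hN : IsOneOffBlock e N) : IsOneOffBlock e (M * N) := by
  rintro i j (hi | hj)
  · have hrow : M i = (1 : Matrix n n α) i := funext fun k ↦ hM i k (Or.inl hi)
    rw [mul_apply', hrow, ← mul_apply', Matrix.one_mul, hN i j (Or.inl hi)]
  · have hcol : (fun k ↦ N k j) = fun k ↦ (1 : Matrix n n α) k j :=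
      funext fun k ↦ hN k j (Or.inr hj)
    rw [mul_apply', hcol, ← mul_apply', Matrix.mul_one, hM i j (Or.inr hj)]

variable [Fintype ι]

theorem submatrix_mul [NonAssocSemiring α] (he : Function.Injective e) {M : Matrix n n α}
    (hM : IsOneOffBlock e M) (N : Matrix n n α) :
    (M * N).submatrix e e = M.submatrix e e * N.submatrix e e := by
  ext a b
  refine (Fintype.sum_of_injective e he _ _ (fun k hk ↦ ?_) fun _ ↦ rfl).symm
  change M (e a) k * N k (e b) = 0
  rw [hM (e a) k (Or.inr hk), one_apply_ne (fun h ↦ hk ⟨a, h⟩), zero_mul]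

theorem mem_unitaryGroup_iff [DecidableEq ι] [CommRing α] [StarRing α]
    (he : Function.Injective e) {M : Matrix n n α} (hM : IsOneOffBlock e M) :
    M ∈ unitaryGroup n α ↔ M.submatrix e e ∈ unitaryGroup ι α := by
  rw [Matrix.mem_unitaryGroup_iff, Matrix.mem_unitaryGroup_iff, star_eq_conjTranspose,
    star_eq_conjTranspose, (hM.mul hM.conjTranspose).eq_iff_submatrix_eq one,
    hM.submatrix_mul he, conjTranspose_submatrix, submatrix_one e he]

end IsOneOffBlock

end Matrix

theorem twoLevel_unitary_iff_component_unitary_general (N : ℕ)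
    (c r : Fin N) (hcr : c < r) (M : Matrix (Fin N) (Fin N) ℂ)
    (hM : ∀ i j : Fin N, ¬((i = c ∨ i = r) ∧ (j = c ∨ j = r)) →
      M i j = (1 : Matrix (Fin N) (Fin N) ℂ) i j) :
    M ∈ Matrix.unitaryGroup (Fin N) ℂ ↔
      (Matrix.of ![![M c c, M c r], ![M r c, M r r]]) ∈ Matrix.unitaryGroup (Fin 2) ℂ := by
  have he : Function.Injective ![c, r] := by
    simpa [Function.Injective, Fin.forall_fin_two] using ⟨hcr.ne, hcr.ne'⟩
  have hrange (i : Fin N) : i ∈ Set.range ![c, r] ↔ i = c ∨ i = r := by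
    simp [eq_comm, or_comm]
  have hM' : Matrix.IsOneOffBlock ![c, r] M := fun i j hij ↦
    hM i j (by rwa [hrange, hrange, ← not_and_or] at hij)
  have hblock : M.submatrix ![c, r] ![c, r] = Matrix.of ![![M c c, M c r], ![M r c, M r r]] := by
    ext a b
    fin_cases a <;> fin_cases b <;> rfl
  rw [hM'.mem_unitaryGroup_iff he, hblock]

/-- A two-level matrix (acting on components `c < r`) is unitary if and only if its
`2 × 2` component matrix is unitary. -/
theorem twoLevel_unitary_iff_component_unitary (N : ℕ) (hN : 2 ≤ N)
    (c r : Fin N) (hcr : c < r) (M : Matrix (Fin N) (Fin N) ℂ)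
    (hM : ∀ i j : Fin N, ¬((i = c ∨ i = r) ∧ (j = c ∨ j = r)) →
      M i j = (1 : Matrix (Fin N) (Fin N) ℂ) i j) :
    M ∈ Matrix.unitaryGroup (Fin N) ℂ ↔
      (Matrix.of ![![M c c, M c r], ![M r c, M r r]]) ∈ Matrix.unitaryGroup (Fin 2) ℂ :=
  twoLevel_unitary_iff_component_unitary_general N c r hcr M hM
end

section
/- Fix n ≥ 1 and c, r < 2^n. The Gray code sequence graySeq(c, r) is well defined (the iteration terminates), its first element is c, its last element is r, and any two consecutive elements of the sequence differ in exactly one bit position of their n-bit binary expansions (i.e., their XOR is a power of two). -/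
/-- One pass of the Gray-code iteration with explicit fuel: starting from `g`, repeatedly
flip the lowest bit position at which the current value differs from `r` (XOR with `2^t`
where `t` is the 2-adic valuation of the XOR), stopping at the first value equal to `r`. -/
def grayAux (r : ℕ) : ℕ → ℕ → List ℕ
  | 0, g => [g]
  | fuel + 1, g =>
    if g = r then [g]
    else g :: grayAux r fuel (g ^^^ 2 ^ ((g ^^^ r).factorization 2))

/-- The Gray code sequence between `c` and `r` for `n`-bit states (fuel `n + 1` allows
up to `n` bit flips, which always suffices when `c, r < 2^n`). -/
def graySeq (n c r : ℕ) : List ℕ := grayAux r (n + 1) c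


lemma dvd_of_testBit (x w : ℕ) (h : ∀ i < w, x.testBit i = false) : 2^w ∣ x := by
  apply Nat.dvd_of_mod_eq_zero
  apply Nat.zero_of_testBit_eq_false
  intro i
  simp only [Nat.testBit_mod_two_pow, Bool.and_eq_false_iff, decide_eq_false_iff_not, not_lt]
  by_cases hi : i < w
  · exact Or.inr (h i hi)
  · exact Or.inl (by omega)

lemma testBit_fact (x : ℕ) (hx : x ≠ 0) :
    (∀ i < x.factorization 2, x.testBit i = false) ∧ x.testBit (x.factorization 2) = true := by
  set v := x.factorization 2 with hv
  have h1 : 2^v ∣ x := Nat.ordProj_dvd x 2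
  have h2 : ¬ 2 ∣ x / 2^v := Nat.not_dvd_ordCompl Nat.prime_two hx
  obtain ⟨c, hc⟩ := h1
  constructor
  · intro i hi
    have hxdi : x / 2^i = 2^(v-i) * c := by
      rw [hc]
      have : (2:ℕ)^v = 2^i * 2^(v-i) := by rw [← pow_add]; congr 1; omega
      rw [this, mul_assoc, Nat.mul_div_cancel_left _ (pow_pos (by norm_num) i)]
    have hmod : x / 2^i % 2 = 0 := by
      rw [hxdi]
      have hvi : v - i = (v-i-1)+1 := by omega
      rw [hvi, pow_succ, mul_comm ((2:ℕ)^(v-i-1)) 2, mul_assoc]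
      exact Nat.mul_mod_right 2 _
    rw [Nat.testBit_eq_decide_div_mod_eq]
    simp [hmod]
  · have : x / 2^v % 2 = 1 := Nat.two_dvd_ne_zero.mp h2
    rw [Nat.testBit_eq_decide_div_mod_eq]
    simp [this]

lemma grayAux_self (r fuel : ℕ) : grayAux r fuel r = [r] := by
  cases fuel <;> simp [grayAux]

lemma grayAux_cons (r fuel g : ℕ) : ∃ l, grayAux r fuel g = g :: l := by
  cases fuel with
  | zero => exact ⟨[], rfl⟩
  | succ f =>
    by_cases h : g = r
    · exact ⟨[], by simp [grayAux, h]⟩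
    · exact ⟨grayAux r f (g ^^^ 2 ^ ((g ^^^ r).factorization 2)), by simp [grayAux, h]⟩

lemma gray_main (n r : ℕ) : ∀ j g, g ^^^ r < 2^n → (g ≠ r → 2^(n-j) ∣ g ^^^ r) →
    (∀ fuel, j ≤ fuel → grayAux r fuel g = grayAux r j g) ∧
    (grayAux r j g).getLast? = some r ∧
    ∀ k, k+1 < (grayAux r j g).length →
      ∃ t, t < n ∧ (grayAux r j g).getD k 0 ^^^ (grayAux r j g).getD (k+1) 0 = 2^t := by
  intro j
  induction j with
  | zero =>
    intro g hlt hdvd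
    have hg : g = r := by
      by_contra h
      have h1 := hdvd h
      simp only [Nat.sub_zero] at h1
      have : g ^^^ r ≠ 0 := mt xor_eq_zero_iff.mp h
      have := Nat.le_of_dvd (Nat.pos_of_ne_zero this) h1
      omega
    subst hg
    refine ⟨fun fuel _ => by rw [grayAux_self, grayAux_self], ?_, ?_⟩
    · simp [grayAux_self]
    · simp [grayAux_self]
  | succ j ih =>
    intro g hlt hdvd
    by_cases hg : g = r
    · subst hg
      refine ⟨fun fuel _ => by rw [grayAux_self, grayAux_self], ?_, ?_⟩
      · simp [grayAux_self]
      · simp [grayAux_self]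
    · set x := g ^^^ r with hx
      have hxne : x ≠ 0 := mt xor_eq_zero_iff.mp hg
      set v := x.factorization 2 with hv
      obtain ⟨hlow, hbit⟩ := testBit_fact x hxne
      set g' := g ^^^ 2^v with hg'
      have hx' : g' ^^^ r = x ^^^ 2^v := by
        rw [hg', hx, Nat.xor_comm g (2^v), Nat.xor_assoc, Nat.xor_comm (2^v)]
      have hvlt : v < n := by
        have h1 : 2^v ≤ x := Nat.ge_two_pow_of_testBit hbit
        have := lt_of_le_of_lt h1 hlt
        exact (Nat.pow_lt_pow_iff_right (by norm_num)).mp this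
      -- new xor divisible by 2^(v+1)
      have hdvd' : 2^(v+1) ∣ g' ^^^ r := by
        rw [hx']
        apply dvd_of_testBit
        intro i hi
        rw [Nat.testBit_xor]
        rcases lt_or_eq_of_le (Nat.lt_succ_iff.mp hi) with h | h
        · rw [hlow i h, Nat.testBit_two_pow_of_ne (by omega)]; rfl
        · subst h
          rw [hbit, Nat.testBit_two_pow_self]; rfl
    -- old valuation ≥ n - (j+1)
      have hvge : n - (j+1) ≤ v := by
        have h1 := hdvd hg
        exact (Nat.Prime.pow_dvd_iff_le_factorization Nat.prime_two hxne).mp h1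
      have hdvd2 : g' ≠ r → 2^(n-j) ∣ g' ^^^ r := fun _ =>
        dvd_trans (pow_dvd_pow 2 (by omega)) hdvd'
      have hlt' : g' ^^^ r < 2^n := by
        rw [hx']
        exact Nat.xor_lt_two_pow hlt (Nat.pow_lt_pow_right (by norm_num) hvlt)
      obtain ⟨ihF, ihL, ihC⟩ := ih g' hlt' hdvd2
      have hunf : grayAux r (j+1) g = g :: grayAux r j g' := by
        simp [grayAux, hg, ← hx, ← hv, ← hg']
      refine ⟨?_, ?_, ?_⟩
      · intro fuel hfuel
        obtain ⟨f, rfl⟩ : ∃ f, fuel = f + 1 := ⟨fuel - 1, by omega⟩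
        rw [hunf]
        show (if g = r then [g] else g :: grayAux r f (g ^^^ 2 ^ ((g ^^^ r).factorization 2))) = _
        rw [if_neg hg]
        congr 1
        exact ihF f (by omega)
      · rw [hunf]
        obtain ⟨l, hl⟩ := grayAux_cons r j g'
        rw [hl] at ihL ⊢
        rw [List.getLast?_cons_cons]
        exact ihL
      · intro k hk
        rw [hunf] at hk ⊢
        cases k with
        | zero =>
          obtain ⟨l, hl⟩ := grayAux_cons r j g'
          rw [hl]
          refine ⟨v, hvlt, ?_⟩
          simp [List.getD]
          rw [hg', xor_cancel_left]
        | succ k =>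
          simp only [List.length_cons] at hk
          obtain ⟨t, ht, heq⟩ := ihC k (by omega)
          exact ⟨t, ht, by simpa using heq⟩

/-- The Gray code sequence `graySeq n c r` is well defined (the iteration terminates:
any fuel `≥ n + 1` yields the same sequence, which ends at `r`), its first element is
`c`, its last element is `r`, and consecutive elements differ in exactly one bit
position of their `n`-bit binary expansions (their XOR is a power of two). -/
theorem graySeq_wellDefined (n c r : ℕ) (hn : 1 ≤ n) (hc : c < 2 ^ n) (hr : r < 2 ^ n) :
    (∀ fuel : ℕ, n + 1 ≤ fuel → grayAux r fuel c = graySeq n c r) ∧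
    (graySeq n c r).head? = some c ∧
    (graySeq n c r).getLast? = some r ∧
    (∀ k : ℕ, k + 1 < (graySeq n c r).length →
      ∃ t : ℕ, t < n ∧
        (graySeq n c r).getD k 0 ^^^ (graySeq n c r).getD (k + 1) 0 = 2 ^ t) := by
  have hxc : c ^^^ r < 2 ^ n := Nat.xor_lt_two_pow hc hr
  obtain ⟨F, L, C⟩ := gray_main n r n c hxc (fun _ => by simp)
  have hseq : graySeq n c r = grayAux r n c := F (n+1) (by omega)
  refine ⟨?_, ?_, ?_, ?_⟩
  · intro fuel hfuel
    rw [hseq, F fuel (by omega)]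
  · rw [hseq]
    obtain ⟨l, hl⟩ := grayAux_cons r n c
    rw [hl]
    rfl
  · rw [hseq]; exact L
  · rw [hseq]; exact C
end

section
/- Fix n ≥ 1 and c, r < 2^n. The Gray code sequence graySeq(c, r) has exactly d + 1 elements, where d is the Hamming distance between c and r (the number of bit positions at which the binary expansions of c and r differ). In particular, graySeq(c, r) has at most n + 1 elements. -/
/-- The Hamming distance between natural numbers: the number of 1-bits in their XOR. -/
def hamDist (c r : ℕ) : ℕ := (Nat.bits (c ^^^ r)).count true

private lemma xor_double (a b : ℕ) : (2 * a) ^^^ (2 * b) = 2 * (a ^^^ b) := by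
  have := Nat.xor_bit false a false b
  simpa [Nat.bit] using this

private lemma xor_double' (a b : ℕ) : (2 * a + 1) ^^^ (2 * b + 1) = 2 * (a ^^^ b) := by
  have := Nat.xor_bit true a true b
  simpa [Nat.bit] using this

private lemma count_pos (x : ℕ) (hx : x ≠ 0) : 0 < (Nat.bits x).count true := by
  induction x using Nat.strong_induction_on with
  | _ x ih =>
    rcases Nat.even_or_odd x with he | ho
    · obtain ⟨k, hk⟩ := he
      have hk2 : x = 2 * k := by omega
      have hk0 : k ≠ 0 := by omega
      rw [hk2, Nat.bit0_bits k hk0]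
      simpa using ih k (by omega) hk0
    · obtain ⟨k, hk⟩ := ho
      rw [hk, Nat.bit1_bits k]
      simp

private lemma count_flip (x : ℕ) (hx : x ≠ 0) :
    (Nat.bits (x ^^^ 2 ^ (x.factorization 2))).count true + 1 = (Nat.bits x).count true := by
  induction x using Nat.strong_induction_on with
  | _ x ih =>
    rcases Nat.even_or_odd x with he | ho
    · obtain ⟨k, hk⟩ := he
      have hk2 : x = 2 * k := by omega
      have hk0 : k ≠ 0 := by omega
      subst hk2
      have hfac : (2 * k).factorization 2 = k.factorization 2 + 1 := by
        rw [Nat.factorization_mul (by norm_num) hk0]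
        simp [Nat.Prime.factorization_self Nat.prime_two, add_comm]
      rw [hfac, pow_succ, mul_comm (2 ^ k.factorization 2) 2, xor_double,
        Nat.bit0_bits k hk0]
      have IH := ih k (by omega) hk0
      by_cases h0 : k ^^^ 2 ^ k.factorization 2 = 0
      · rw [h0]
        simpa [h0] using IH
      · rw [Nat.bit0_bits _ h0]
        simpa using IH
    · obtain ⟨k, hk⟩ := ho
      have hfac : x.factorization 2 = 0 := by
        apply Nat.factorization_eq_zero_of_not_dvd
        omega
      have hxor : x ^^^ 1 = 2 * k := by
        have : (2 * k + 1) ^^^ (2 * 0 + 1) = 2 * (k ^^^ 0) := xor_double' k 0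
        simpa [hk] using this
      rw [hfac, pow_zero, hxor, hk, Nat.bit1_bits k]
      by_cases hk0 : k = 0
      · simp [hk0]
      · rw [Nat.bit0_bits k hk0]
        simp

private lemma grayAux_length (r : ℕ) : ∀ fuel g, hamDist g r ≤ fuel →
    (grayAux r fuel g).length = hamDist g r + 1 := by
  intro fuel
  induction fuel with
  | zero =>
    intro g hg
    simp [grayAux]
    omega
  | succ fuel ih =>
    intro g hg
    by_cases hgr : g = r
    · simp [grayAux, hgr, hamDist]
    · have hx : g ^^^ r ≠ 0 := fun h => hgr (xor_eq_zero_iff.mp h)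
      rw [grayAux, if_neg hgr]
      have hkey : hamDist (g ^^^ 2 ^ ((g ^^^ r).factorization 2)) r + 1 = hamDist g r := by
        have : (g ^^^ 2 ^ ((g ^^^ r).factorization 2)) ^^^ r
            = (g ^^^ r) ^^^ 2 ^ ((g ^^^ r).factorization 2) := by
          apply Nat.eq_of_testBit_eq
          intro i
          simp only [Nat.testBit_xor]
          rcases Nat.testBit g i with _|_ <;> rcases Nat.testBit r i with _|_ <;> simp
        unfold hamDist
        rw [this]
        exact count_flip _ hx
      have hpos : 0 < hamDist g r := count_pos _ hx
      have hle : hamDist (g ^^^ 2 ^ ((g ^^^ r).factorization 2)) r ≤ fuel := by omega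
      rw [List.length_cons, ih _ hle]
      omega

/-- The Gray code sequence between `c` and `r` has exactly `d + 1` elements, where `d`
is the Hamming distance between `c` and `r`; in particular it has at most `n + 1`
elements. -/
theorem graySeq_length (n c r : ℕ) (hn : 1 ≤ n) (hc : c < 2 ^ n) (hr : r < 2 ^ n) :
    (graySeq n c r).length = hamDist c r + 1 ∧ (graySeq n c r).length ≤ n + 1 := by
  have hxlt : c ^^^ r < 2 ^ n := by
    by_contra h
    push_neg at h
    obtain ⟨i, hin, hbit⟩ := Nat.exists_ge_and_testBit_of_ge_two_pow h
    have hi : (2:ℕ) ^ n ≤ 2 ^ i := Nat.pow_le_pow_right (by norm_num) hin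
    rw [Nat.testBit_xor, Nat.testBit_lt_two_pow (lt_of_lt_of_le hc hi),
      Nat.testBit_lt_two_pow (lt_of_lt_of_le hr hi)] at hbit
    simp at hbit
  have hham : hamDist c r ≤ n := by
    calc hamDist c r ≤ (Nat.bits (c ^^^ r)).length := List.count_le_length
    _ = (c ^^^ r).size := Nat.size_eq_bits_len _
    _ ≤ n := Nat.size_le.mpr hxlt
  have h1 : (graySeq n c r).length = hamDist c r + 1 :=
    grayAux_length r (n + 1) c (by omega)
  exact ⟨h1, by omega⟩
end

section
/- Fix n ≥ 1 and c, r < 2^n with c ≠ r, and let g₁, …, g_m = graySeq(c, r). For 1 ≤ k ≤ m−1 let t_k be the unique bit position at which g_k and g_{k+1} differ. Then the sequence t₁, t₂, …, t_{m−1} is strictly increasing, and the set {t₁, …, t_{m−1}} is exactly the set of bit positions at which the binary expansions of c and r differ. -/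
lemma grayAux_ne_nil (r fuel g : ℕ) : grayAux r fuel g ≠ [] := by
  cases fuel <;> simp only [grayAux]
  · simp
  · split <;> simp

lemma grayAux_getD_zero (r fuel g : ℕ) : (grayAux r fuel g).getD 0 0 = g := by
  cases fuel <;> simp only [grayAux]
  · simp
  · split <;> simp

lemma low_bits (x : ℕ) (hx : x ≠ 0) :
    x.testBit (x.factorization 2) = true ∧ ∀ i < x.factorization 2, x.testBit i = false := by
  set t := x.factorization 2 with htdef
  obtain ⟨m, hm⟩ := Nat.ordProj_dvd x 2
  have hmodd : m % 2 = 1 := by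
    rcases Nat.mod_two_eq_zero_or_one m with h | h
    · exfalso
      apply Nat.pow_succ_factorization_not_dvd hx Nat.prime_two
      rw [← htdef, pow_succ, hm]
      exact mul_dvd_mul_left _ (Nat.dvd_of_mod_eq_zero h)
    · exact h
  have hpos : 0 < (2:ℕ) ^ t := Nat.pow_pos (n := t) (by norm_num)
  constructor
  · rw [Nat.testBit_eq_decide_div_mod_eq]
    have hq : x / 2 ^ t = m := by rw [hm]; exact Nat.mul_div_cancel_left m hpos
    simp [hq, hmodd]
  · intro i hi
    rw [Nat.testBit_eq_decide_div_mod_eq]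
    have hq : x / 2 ^ i = 2 ^ (t - i) * m := by
      rw [hm, show (2:ℕ) ^ t = 2 ^ i * 2 ^ (t - i) by rw [← pow_add]; congr 1; omega,
        mul_assoc]
      exact Nat.mul_div_cancel_left _ (Nat.pow_pos (n := i) (by norm_num))
    have h2 : 2 ∣ x / 2 ^ i := by
      rw [hq]
      exact Dvd.dvd.mul_right (dvd_pow_self 2 (by omega)) m
    have := Nat.mod_eq_zero_of_dvd h2
    simp [this]

lemma ne_iff_xor (a b i : ℕ) : a.testBit i ≠ b.testBit i ↔ (a ^^^ b).testBit i = true := by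
  rw [Nat.testBit_xor]; cases a.testBit i <;> cases b.testBit i <;> simp

lemma key (r : ℕ) : ∀ fuel g,
    (g ^^^ r ≠ 0 → g ^^^ r < 2 ^ ((g ^^^ r).factorization 2 + fuel)) →
    ∀ t : ℕ → ℕ,
    (∀ k, k + 1 < (grayAux r fuel g).length →
      (grayAux r fuel g).getD k 0 ^^^ (grayAux r fuel g).getD (k + 1) 0 = 2 ^ t k) →
    (∀ j k, j < k → k + 1 < (grayAux r fuel g).length → t j < t k) ∧
    (∀ i, (∃ k, k + 1 < (grayAux r fuel g).length ∧ t k = i) ↔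
      g.testBit i ≠ r.testBit i) := by
  intro fuel
  induction fuel with
  | zero =>
    intro g hinv t ht
    have hgr : g = r := by
      by_contra h
      have hne : g ^^^ r ≠ 0 := fun h0 => h (by have := congrArg (· ^^^ r) h0; simpa [Nat.xor_assoc] using this)
      have h1 := hinv hne
      have h2 : 2 ^ ((g ^^^ r).factorization 2) ∣ g ^^^ r := Nat.ordProj_dvd _ 2
      have h3 := Nat.le_of_dvd (Nat.pos_of_ne_zero hne) h2
      simp only [Nat.add_zero] at h1
      omega
    subst hgr
    refine ⟨fun j k hjk hk => ?_, fun i => ?_⟩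
    · simp [grayAux] at hk
    · simp [grayAux]
  | succ fuel ih =>
    intro g hinv t ht
    by_cases hgr : g = r
    · subst hgr
      refine ⟨fun j k hjk hk => ?_, fun i => ?_⟩
      · simp [grayAux] at hk
      · simp [grayAux]
    · have hdne : g ^^^ r ≠ 0 := fun h0 => hgr (by have := congrArg (· ^^^ r) h0; simpa [Nat.xor_assoc] using this)
      set d := g ^^^ r with hd
      set t0 := d.factorization 2 with ht0def
      obtain ⟨hbit0, hlow⟩ := low_bits d hdne
      set g' := g ^^^ 2 ^ t0 with hg'
      have hL : grayAux r (fuel + 1) g = g :: grayAux r fuel g' := by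
        rw [grayAux]
        simp [hgr]
        rfl
      set L' := grayAux r fuel g' with hL'
      have hd'eq : g' ^^^ r = d ^^^ 2 ^ t0 := by
        rw [hg', hd, Nat.xor_assoc, Nat.xor_comm (2 ^ t0) r, ← Nat.xor_assoc]
      set d' := g' ^^^ r with hd'
      have hbit' : ∀ i, d'.testBit i = if i = t0 then false else d.testBit i := by
        intro i
        rw [hd'eq, Nat.testBit_xor]
        by_cases h : i = t0
        · simp [h, Nat.testBit_two_pow_self, hbit0]; exact hbit0
        · simp [Nat.testBit_two_pow_of_ne (Ne.symm h), h]
      have hlow' : ∀ i ≤ t0, d'.testBit i = false := by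
        intro i hi
        rw [hbit' i]
        rcases eq_or_ne i t0 with h | h
        · simp [h]
        · simp [h, hlow i (lt_of_le_of_ne hi h)]
      have hd'lt : d' < d := by
        apply Nat.lt_of_testBit t0 (hlow' t0 le_rfl) hbit0
        intro j hj
        rw [hbit' j]
        simp [Nat.ne_of_gt hj]
      have hinv' : d' ≠ 0 → d' < 2 ^ (d'.factorization 2 + fuel) := by
        intro h'
        obtain ⟨hb', _⟩ := low_bits d' h'
        have ht0' : t0 < d'.factorization 2 := by
          by_contra h
          push_neg at h
          rw [hlow' _ h] at hb'
          exact Bool.false_ne_true hb'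
        calc d' < d := hd'lt
          _ < 2 ^ (t0 + (fuel + 1)) := hinv hdne
          _ ≤ 2 ^ (d'.factorization 2 + fuel) :=
            Nat.pow_le_pow_right (by norm_num) (by omega)
      have hlen' : 0 < L'.length := List.length_pos_iff.mpr (grayAux_ne_nil r fuel g')
      have ht' : ∀ k, k + 1 < L'.length →
          L'.getD k 0 ^^^ L'.getD (k + 1) 0 = 2 ^ t (k + 1) := by
        intro k hk
        have := ht (k + 1) (by rw [hL]; simp only [List.length_cons]; omega)
        rwa [hL, List.getD_cons_succ, List.getD_cons_succ] at this
      obtain ⟨mono', range'⟩ := ih g' hinv' (fun k => t (k + 1)) ht'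
      have ht00 : t 0 = t0 := by
        have h1 := ht 0 (by rw [hL]; simp only [List.length_cons]; omega)
        rw [hL, List.getD_cons_zero, List.getD_cons_succ, hL', grayAux_getD_zero,
          hg'] at h1
        rw [← Nat.xor_assoc, Nat.xor_self, Nat.zero_xor] at h1
        exact (Nat.pow_right_injective le_rfl h1.symm)
      refine ⟨fun j k hjk hk => ?_, fun i => ?_⟩
      · rw [hL, List.length_cons] at hk
        obtain ⟨k', rfl⟩ : ∃ k', k = k' + 1 := ⟨k - 1, by omega⟩
        have hk' : k' + 1 < L'.length := by omega
        have hbitk : d'.testBit (t (k' + 1)) = true := by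
          have h1 := (range' (t (k' + 1))).mp ⟨k', hk', rfl⟩
          exact (ne_iff_xor g' r _).mp h1
        have htk_gt : t0 < t (k' + 1) := by
          by_contra h
          push_neg at h
          rw [hlow' _ h] at hbitk
          exact Bool.false_ne_true hbitk
        cases j with
        | zero => rw [ht00]; exact htk_gt
        | succ j' => exact mono' j' k' (by omega) hk'
      · rw [ne_iff_xor, ← hd]
        constructor
        · rintro ⟨k, hk, rfl⟩
          rw [hL, List.length_cons] at hk
          cases k with
          | zero => rw [ht00]; exact hbit0
          | succ k' =>
            have hk' : k' + 1 < L'.length := by omega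
            have hb := (ne_iff_xor g' r _).mp ((range' (t (k' + 1))).mp ⟨k', hk', rfl⟩)
            rw [hbit'] at hb
            rcases eq_or_ne (t (k' + 1)) t0 with h | h
            · simp [h] at hb
            · simpa [h] using hb
        · intro hbi
          by_cases hi : i = t0
          · exact ⟨0, by rw [hL, List.length_cons]; omega, by rw [ht00, hi]⟩
          · have hb' : d'.testBit i = true := by rw [hbit']; simp [hi, hbi]
            obtain ⟨k', hk', hke⟩ := (range' i).mpr ((ne_iff_xor g' r i).mpr hb')
            exact ⟨k' + 1, by rw [hL, List.length_cons, hL']; omega, hke⟩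

/-- If `t k` is the unique bit position at which the `k`-th and `(k+1)`-st elements of
the Gray code sequence `graySeq n c r` differ (for `0 ≤ k < m - 1`, `m` the length of
the sequence), then `t` is strictly increasing on these indices, and the set of values
`t k` is exactly the set of bit positions at which `c` and `r` differ. -/
theorem graySeq_flips_strictMono_and_range (n c r : ℕ) (hn : 1 ≤ n)
    (hc : c < 2 ^ n) (hr : r < 2 ^ n) (hcr : c ≠ r) (t : ℕ → ℕ)
    (ht : ∀ k : ℕ, k + 1 < (graySeq n c r).length →
      (graySeq n c r).getD k 0 ^^^ (graySeq n c r).getD (k + 1) 0 = 2 ^ t k) :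
    (∀ j k : ℕ, j < k → k + 1 < (graySeq n c r).length → t j < t k) ∧
    (∀ i : ℕ, (∃ k : ℕ, k + 1 < (graySeq n c r).length ∧ t k = i) ↔
      c.testBit i ≠ r.testBit i) := by
  unfold graySeq at ht ⊢
  have hinv : c ^^^ r ≠ 0 → c ^^^ r < 2 ^ ((c ^^^ r).factorization 2 + (n + 1)) := by
    intro _
    calc c ^^^ r < 2 ^ n := Nat.xor_lt_two_pow hc hr
      _ ≤ 2 ^ ((c ^^^ r).factorization 2 + (n + 1)) :=
        Nat.pow_le_pow_right (by norm_num) (by omega)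
  exact key r (n + 1) c hinv t ht
end

section
/- For every natural number n ≥ 1, the sum over all ordered pairs (c, r) with 0 ≤ c < r ≤ 2^n − 1 of the quantity 2·d(c, r) − 1, where d(c, r) is the Hamming distance between c and r, equals (n − 1) · 2^(2n−1) + 2^(n−1). -/
lemma count_bits_eq_sum : ∀ (n : ℕ), ∀ x < 2 ^ n,
    (Nat.bits x).count true = ∑ i ∈ Finset.range n, (x.testBit i).toNat := by
  intro n
  induction n with
  | zero => intro x hx; interval_cases x; simp
  | succ n ih =>
    intro x hx
    rcases Nat.eq_zero_or_pos x with rfl | hx0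
    · simp
    have hd : x / 2 < 2 ^ n := by rw [pow_succ] at hx; omega
    rw [Finset.sum_range_succ']
    have hrec := ih (x / 2) hd
    have htb : ∀ i, (x.testBit (i + 1)).toNat = ((x / 2).testBit i).toNat := by
      intro i; rw [Nat.testBit_succ]
    simp only [htb]
    rcases Nat.mod_two_eq_zero_or_one x with h2 | h2
    · have hq : x = 2 * (x / 2) := by omega
      have hq0 : x / 2 ≠ 0 := by omega
      have hb : Nat.bits x = false :: (x / 2).bits := by
        conv_lhs => rw [hq]
        exact Nat.bit0_bits _ hq0
      have ht0 : (x.testBit 0).toNat = 0 := by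
        simp [Nat.testBit_zero, h2]
      rw [hb, ht0, List.count_cons]
      simp [hrec]
    · have hq : x = 2 * (x / 2) + 1 := by omega
      have hb : Nat.bits x = true :: (x / 2).bits := by
        conv_lhs => rw [hq]
        exact Nat.bit1_bits _
      have ht0 : (x.testBit 0).toNat = 1 := by
        simp [Nat.testBit_zero, h2]
      rw [hb, ht0, List.count_cons]
      simp [hrec]

lemma sum_range_two_mul (m : ℕ) (f : ℕ → ℕ) :
    ∑ r ∈ Finset.range (2 * m), f r = ∑ q ∈ Finset.range m, (f (2 * q) + f (2 * q + 1)) := by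
  induction m with
  | zero => simp
  | succ m ih =>
    have h : 2 * (m + 1) = (2 * m + 1) + 1 := by ring
    rw [h, Finset.sum_range_succ, Finset.sum_range_succ, Finset.sum_range_succ, ih]
    ring

lemma sum_testBit : ∀ (n : ℕ), ∀ i < n,
    ∑ r ∈ Finset.range (2 ^ n), (r.testBit i).toNat = 2 ^ (n - 1) := by
  intro n
  induction n with
  | zero => omega
  | succ n ih =>
    intro i hi
    have h2 : (2 : ℕ) ^ (n + 1) = 2 * 2 ^ n := by ring
    rw [h2, sum_range_two_mul]
    cases i with
    | zero =>
      have : ∀ q, ((2 * q).testBit 0).toNat + ((2 * q + 1).testBit 0).toNat = 1 := by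
        intro q; simp [Nat.testBit_zero, Nat.mul_add_mod]
      simp only [this]
      simp
    | succ i =>
      have hin : i < n := by omega
      have hstep : ∀ q, ((2 * q).testBit (i + 1)).toNat + ((2 * q + 1).testBit (i + 1)).toNat
          = 2 * (q.testBit i).toNat := by
        intro q
        rw [Nat.testBit_succ, Nat.testBit_succ]
        have e1 : 2 * q / 2 = q := by omega
        have e2 : (2 * q + 1) / 2 = q := by omega
        rw [e1, e2]; ring
      simp only [hstep]
      rw [← Finset.mul_sum, ih i hin]
      have hn1 : n = (n - 1) + 1 := by omega
      rw [show n + 1 - 1 = (n - 1) + 1 from by omega, pow_succ]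
      ring

lemma sum_xor (n c : ℕ) (hc : c < 2 ^ n) (f : ℕ → ℕ) :
    ∑ r ∈ Finset.range (2 ^ n), f (c ^^^ r) = ∑ r ∈ Finset.range (2 ^ n), f r := by
  apply Finset.sum_nbij' (i := fun r => c ^^^ r) (j := fun r => c ^^^ r)
  · intro a ha
    exact Finset.mem_range.mpr (Nat.xor_lt_two_pow hc (Finset.mem_range.mp ha))
  · intro a ha
    exact Finset.mem_range.mpr (Nat.xor_lt_two_pow hc (Finset.mem_range.mp ha))
  · intro a _; simp [← Nat.xor_assoc]
  · intro a _; simp [← Nat.xor_assoc]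
  · intro a _; simp [← Nat.xor_assoc]

lemma hamDist_comm (a b : ℕ) : hamDist a b = hamDist b a := by
  unfold hamDist; rw [Nat.xor_comm]

lemma hamDist_self (a : ℕ) : hamDist a a = 0 := by
  unfold hamDist; simp

lemma hamDist_pos {n a b : ℕ} (ha : a < 2 ^ n) (hb : b < 2 ^ n) (hab : a ≠ b) :
    1 ≤ hamDist a b := by
  have hx : a ^^^ b ≠ 0 := by
    intro h
    exact hab (xor_eq_zero_iff.mp h)
  have hlt : a ^^^ b < 2 ^ n := Nat.xor_lt_two_pow ha hb
  unfold hamDist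
  rw [count_bits_eq_sum n _ hlt]
  obtain ⟨i, hi⟩ := Nat.exists_testBit_of_ne_zero hx
  have hiN : i < n := by
    by_contra hni
    have : (a ^^^ b).testBit i = false :=
      Nat.testBit_lt_two_pow (lt_of_lt_of_le hlt (Nat.pow_le_pow_right (by norm_num) (by omega)))
    simp [this] at hi
  calc 1 = ((a ^^^ b).testBit i).toNat := by simp [hi]
    _ ≤ _ := Finset.single_le_sum (f := fun i => ((a ^^^ b).testBit i).toNat)
        (fun _ _ => Nat.zero_le _) (Finset.mem_range.mpr hiN)

lemma total_sum (n : ℕ) :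
    ∑ c ∈ Finset.range (2 ^ n), ∑ r ∈ Finset.range (2 ^ n), hamDist c r
      = 2 ^ n * (n * 2 ^ (n - 1)) := by
  rw [Finset.sum_congr rfl (fun c hc => ?_), Finset.sum_const, Finset.card_range, smul_eq_mul]
  have hc' : c < 2 ^ n := Finset.mem_range.mp hc
  calc ∑ r ∈ Finset.range (2 ^ n), hamDist c r
      = ∑ r ∈ Finset.range (2 ^ n), ∑ i ∈ Finset.range n, ((c ^^^ r).testBit i).toNat := by
        apply Finset.sum_congr rfl
        intro r hr
        exact count_bits_eq_sum n _ (Nat.xor_lt_two_pow hc' (Finset.mem_range.mp hr))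
    _ = ∑ i ∈ Finset.range n, ∑ r ∈ Finset.range (2 ^ n), ((c ^^^ r).testBit i).toNat :=
        Finset.sum_comm
    _ = ∑ i ∈ Finset.range n, 2 ^ (n - 1) := by
        apply Finset.sum_congr rfl
        intro i hi
        rw [sum_xor n c hc' (fun x => (x.testBit i).toNat)]
        exact sum_testBit n i (Finset.mem_range.mp hi)
    _ = n * 2 ^ (n - 1) := by simp [mul_comm]

/-- The sum of `2·d(c,r) − 1` over all ordered pairs `(c, r)` with
`0 ≤ c < r ≤ 2^n − 1` equals `(n − 1)·2^(2n−1) + 2^(n−1)`. -/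
theorem sum_gates_over_pairs (n : ℕ) (hn : 1 ≤ n) :
    ∑ p ∈ ((Finset.range (2 ^ n)) ×ˢ (Finset.range (2 ^ n))).filter
        (fun p => p.1 < p.2),
      (2 * hamDist p.1 p.2 - 1)
      = (n - 1) * 2 ^ (2 * n - 1) + 2 ^ (n - 1) := by
  obtain ⟨m, rfl⟩ : ∃ m, n = m + 1 := ⟨n - 1, by omega⟩
  set N := 2 ^ (m + 1) with hN
  set s := (Finset.range N) ×ˢ (Finset.range N) with hs
  set A := s.filter (fun p => p.1 < p.2) with hA
  set B := s.filter (fun p => p.2 < p.1) with hB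
  set d : ℕ × ℕ → ℕ := fun p => hamDist p.1 p.2 with hd
  -- d is positive on A
  have hdpos : ∀ p ∈ A, 1 ≤ d p := by
    intro p hp
    rw [hA, Finset.mem_filter, hs, Finset.mem_product] at hp
    exact hamDist_pos (Finset.mem_range.mp hp.1.1) (Finset.mem_range.mp hp.1.2) (by omega)
  -- swap bijection between A and B, preserving d
  have hswap : ∑ p ∈ B, d p = ∑ p ∈ A, d p := by
    apply Finset.sum_nbij' (i := Prod.swap) (j := Prod.swap)
    · intro p hp
      rw [hB, Finset.mem_filter, hs, Finset.mem_product] at hp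
      rw [hA, Finset.mem_filter, hs, Finset.mem_product]
      exact ⟨⟨hp.1.2, hp.1.1⟩, hp.2⟩
    · intro p hp
      rw [hA, Finset.mem_filter, hs, Finset.mem_product] at hp
      rw [hB, Finset.mem_filter, hs, Finset.mem_product]
      exact ⟨⟨hp.1.2, hp.1.1⟩, hp.2⟩
    · intro a _; simp
    · intro a _; simp
    · intro p _; simp [hd, hamDist_comm]
  have hswapcard : B.card = A.card := by
    apply Finset.card_nbij' (i := Prod.swap) (j := Prod.swap)
    · intro p hp
      rw [hB, Finset.mem_coe, Finset.mem_filter, hs, Finset.mem_product] at hp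
      rw [hA, Finset.mem_coe, Finset.mem_filter, hs, Finset.mem_product]
      exact ⟨⟨hp.1.2, hp.1.1⟩, hp.2⟩
    · intro p hp
      rw [hA, Finset.mem_coe, Finset.mem_filter, hs, Finset.mem_product] at hp
      rw [hB, Finset.mem_coe, Finset.mem_filter, hs, Finset.mem_product]
      exact ⟨⟨hp.1.2, hp.1.1⟩, hp.2⟩
    · intro a _; simp
    · intro a _; simp
  -- decomposition of the full sum
  have hdecomp : ∑ p ∈ A, d p + ∑ p ∈ B, d p = ∑ p ∈ s, d p := by
    rw [← Finset.sum_filter_add_sum_filter_not s (fun p => p.1 < p.2) d]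
    congr 1
    rw [← Finset.sum_filter_add_sum_filter_not (s.filter (fun p => ¬ p.1 < p.2))
      (fun p => p.2 < p.1) d]
    have h1 : (s.filter (fun p => ¬ p.1 < p.2)).filter (fun p => p.2 < p.1) = B := by
      rw [Finset.filter_filter, hB]
      apply Finset.filter_congr
      intro p _
      constructor
      · rintro ⟨_, h⟩; exact h
      · intro h; exact ⟨by omega, h⟩
    have h2 : ∑ p ∈ (s.filter (fun p => ¬ p.1 < p.2)).filter (fun p => ¬ p.2 < p.1), d p = 0 := by
      apply Finset.sum_eq_zero
      intro p hp
      simp only [Finset.filter_filter, Finset.mem_filter] at hp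
      have : p.1 = p.2 := by omega
      simp [hd, this, hamDist_self]
    rw [h1, h2, add_zero]
  -- full sum over the product
  have hfull : ∑ p ∈ s, d p = N * ((m + 1) * 2 ^ m) := by
    rw [hs, Finset.sum_product]
    simpa using total_sum (m + 1)
  -- relation between the target sum and the d-sum
  have hmain : (∑ p ∈ A, (2 * d p - 1)) + A.card = 2 * ∑ p ∈ A, d p := by
    rw [Finset.card_eq_sum_ones, ← Finset.sum_add_distrib, Finset.mul_sum]
    apply Finset.sum_congr rfl
    intro p hp
    have := hdpos p hp
    omega
  -- cardinality: A ∪ B is the off-diagonal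
  have hdiag : (s.filter (fun p => p.1 = p.2)).card = N := by
    rw [← Finset.card_range N]
    apply Finset.card_nbij' (i := fun p => p.1) (j := fun c => (c, c))
    · intro p hp
      rw [Finset.mem_coe, Finset.mem_filter, hs, Finset.mem_product] at hp
      exact hp.1.1
    · intro c hc
      rw [Finset.mem_coe, Finset.mem_filter, hs, Finset.mem_product]
      exact ⟨⟨hc, hc⟩, rfl⟩
    · intro p hp
      rw [Finset.mem_coe, Finset.mem_filter] at hp
      have := hp.2
      ext <;> simp [← this]
    · intro c _; rfl
  have hcard : 2 * A.card + N = N * N := by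
    have h1 : A.card + (s.filter (fun p => ¬ p.1 < p.2)).card = s.card := by
      rw [hA]; exact Finset.card_filter_add_card_filter_not _
    have h2 : B.card + (s.filter (fun p => p.1 = p.2)).card
        = (s.filter (fun p => ¬ p.1 < p.2)).card := by
      have e1 : (s.filter (fun p => ¬ p.1 < p.2)).filter (fun p => p.2 < p.1) = B := by
        rw [Finset.filter_filter, hB]
        apply Finset.filter_congr
        intro p _
        constructor
        · rintro ⟨_, h⟩; exact h
        · intro h; exact ⟨by omega, h⟩
      have e2 : (s.filter (fun p => ¬ p.1 < p.2)).filter (fun p => ¬ p.2 < p.1)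
          = s.filter (fun p => p.1 = p.2) := by
        rw [Finset.filter_filter]
        apply Finset.filter_congr
        intro p _
        constructor
        · rintro ⟨h1, h2⟩; omega
        · intro h; omega
      rw [← e1, ← e2]
      exact Finset.card_filter_add_card_filter_not _
    have h3 : s.card = N * N := by
      rw [hs, Finset.card_product, Finset.card_range]
    rw [hdiag] at h2
    omega
  -- final arithmetic
  have hSA : 2 * ∑ p ∈ A, d p = N * ((m + 1) * 2 ^ m) := by omega
  simp only [show m + 1 - 1 = m from by omega, show 2 * (m + 1) - 1 = 2 * m + 1 from by omega]
  set P := (2 : ℕ) ^ m with hP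
  set Q := P * P with hQ
  set R := m * Q with hR
  have e1 : N * ((m + 1) * P) = 2 * R + 2 * Q := by rw [hN, hR, hQ, hP]; ring
  have e2 : N * N = 4 * Q := by rw [hN, hQ, hP]; ring
  have e3 : (2 : ℕ) ^ (2 * m + 1) = 2 * Q := by rw [hQ, hP]; ring
  have e4 : N = 2 * P := by rw [hN, hP]; ring
  have hX : ∑ p ∈ A, (2 * hamDist p.1 p.2 - 1) = ∑ p ∈ A, (2 * d p - 1) := rfl
  rw [hX, e3, show m * (2 * Q) = 2 * R from by rw [hR]; ring]
  rw [e1] at hSA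
  rw [e2, e4] at hcard
  omega
end

section
/- Fix n ≥ 1 and let c, r₁, r₂ < 2^n with r₁ > c, r₂ > c, c even, r₁ and r₂ both odd, and suppose the Hamming distances d(c, r₁) ≥ 2 and d(c, r₂) ≥ 2. Then the X-gate lists gatesList(c, r₁) and gatesList(c, r₂) are both nonempty and their first elements are equal (both equal to the gate that flips bit 0 conditioned on bits 1, …, n−1 of c). -/
/-- A controlled-NOT gate on `n` qubits: a target bit position together with the control
condition assigning to each non-target bit position in `{0, …, n−1}` the required
control value (`none` at the target position). -/
abbrev Gate (n : ℕ) := ℕ × (Fin n → Option Bool)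

/-- The gate `G(x, y)` for states `x, y` differing in exactly one bit position `t`: the
pair of `t` and the function giving the `i`-th bit of `x` at each position `i ≠ t`. -/
def gate (n x y : ℕ) : Gate n :=
  ((x ^^^ y).log2,
   fun i => if (i : ℕ) = (x ^^^ y).log2 then none else some (x.testBit i))

/-- The X-gate list of the pair `(c, r)`: the gates for all transitions of the Gray code
sequence `graySeq n c r` except the final one. -/
def gatesList (n c r : ℕ) : List (Gate n) :=
  (((graySeq n c r).zip (graySeq n c r).tail).dropLast).map fun p => gate n p.1 p.2

lemma key_s13 (n c r : ℕ) (hn : 1 ≤ n)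
    (hceven : c % 2 = 0) (hodd : r % 2 = 1) (hd : 2 ≤ hamDist c r) :
    gatesList n c r ≠ [] ∧
    (gatesList n c r).head? =
      some ((0 : ℕ), fun i : Fin n => if (i : ℕ) = 0 then none else some (c.testBit i)) := by
  obtain ⟨m, rfl⟩ := Nat.exists_eq_add_of_le hn
  have hxodd : (c ^^^ r) % 2 = 1 := by rw [Nat.xor_mod_two_eq]; omega
  have hfact : (c ^^^ r).factorization 2 = 0 :=
    Nat.factorization_eq_zero_of_not_dvd (by omega)
  have hcr : c ≠ r := by omega
  have hc1r : c ^^^ 1 ≠ r := by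
    intro h
    have hx1 : c ^^^ r = 1 := by
      rw [← h]; exact xor_cancel_left c 1
    rw [hamDist, hx1, Nat.one_bits] at hd
    simp at hd
  have h1 : graySeq (1 + m) c r
      = c :: (c ^^^ 1) :: grayAux r m ((c ^^^ 1) ^^^ 2 ^ (((c ^^^ 1) ^^^ r).factorization 2)) := by
    show grayAux r (1 + m + 1) c = _
    rw [show 1 + m + 1 = (m + 1) + 1 by omega]
    simp only [grayAux, if_neg hcr, hfact, pow_zero, if_neg hc1r]
  obtain ⟨a, t, ht⟩ := List.exists_cons_of_ne_nil
    (grayAux_ne_nil r m ((c ^^^ 1) ^^^ 2 ^ (((c ^^^ 1) ^^^ r).factorization 2)))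
  rw [ht] at h1
  have hgate : gate (1 + m) c (c ^^^ 1)
      = ((0 : ℕ), fun i : Fin (1 + m) => if (i : ℕ) = 0 then none else some (c.testBit i)) := by
    have hx : c ^^^ (c ^^^ 1) = 1 := xor_cancel_left c 1
    have hl : Nat.log2 1 = 0 := by rw [Nat.log2_eq_log_two]; simp
    simp [gate, hx, hl]
  constructor
  · simp [gatesList, h1]
  · simp [gatesList, h1, hgate]

/-- For an even column `c` and odd rows `r₁, r₂` at Hamming distance at least `2` from
`c`, the X-gate lists are nonempty and both start with the gate flipping bit `0`
conditioned on bits `1, …, n−1` of `c`. -/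
theorem intracolumn_overlap_exists (n c r₁ r₂ : ℕ) (hn : 1 ≤ n)
    (hc : c < 2 ^ n) (hr₁ : r₁ < 2 ^ n) (hr₂ : r₂ < 2 ^ n)
    (h₁ : c < r₁) (h₂ : c < r₂)
    (hceven : c % 2 = 0) (hodd₁ : r₁ % 2 = 1) (hodd₂ : r₂ % 2 = 1)
    (hd₁ : 2 ≤ hamDist c r₁) (hd₂ : 2 ≤ hamDist c r₂) :
    gatesList n c r₁ ≠ [] ∧ gatesList n c r₂ ≠ [] ∧
    (gatesList n c r₁).head? =
      some ((0 : ℕ), fun i : Fin n => if (i : ℕ) = 0 then none else some (c.testBit i)) ∧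
    (gatesList n c r₂).head? =
      some ((0 : ℕ), fun i : Fin n => if (i : ℕ) = 0 then none else some (c.testBit i)) := by
  obtain ⟨k1, k2⟩ := key_s13 n c r₁ hn hceven hodd₁ hd₁
  obtain ⟨k3, k4⟩ := key_s13 n c r₂ hn hceven hodd₂ hd₂
  exact ⟨k1, k3, k2, k4⟩
end

section
/- Define a sequence of integers p by p(2) = 8 and, for n ≥ 3, p(n) = 4·(p(n−1) + (2^(n−1) − 2)) + 5·(2^(n−1) − 1) + 1 − 2·(2^(n−1) − 1). Then for all n ≥ 2, 3·p(n) = 7·2^(2n−1) − 21·2^(n−1) + 10; equivalently p(n) = (7/3)·2^(2n−1) − 7·2^(n−1) + 10/3. -/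
/-!
The recurrence simplifies to `p (n + 1) = 4 p n + 7·2^n − 10`. The closed form satisfies the same
affine recurrence after multiplying the inhomogeneous term by 3, and agrees with `3 p` at `n = 2`,
so the two sequences coincide.
-/

theorem eq_of_affine_recurrence {R : Type*} [Add R] [Mul R] {u v b : ℕ → R} {a : R} {k : ℕ}
    (hu : ∀ n, k ≤ n → u (n + 1) = a * u n + b n)
    (hv : ∀ n, k ≤ n → v (n + 1) = a * v n + b n) (hk : u k = v k) :
    ∀ n, k ≤ n → u n = v n := by
  intro n hn
  induction n, hn using Nat.le_induction with
  | base => exact hk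
  | succ n hn ih => rw [hu n hn, hv n hn, ih]

theorem poa_recurrence_simplified (p : ℕ → ℤ)
    (hrec : ∀ n : ℕ, 3 ≤ n →
      p n = 4 * (p (n - 1) + ((2 : ℤ) ^ (n - 1) - 2)) + 5 * ((2 : ℤ) ^ (n - 1) - 1) + 1
        - 2 * ((2 : ℤ) ^ (n - 1) - 1))
    (n : ℕ) (hn : 2 ≤ n) : p (n + 1) = 4 * p n + (7 * 2 ^ n - 10) := by
  rw [hrec (n + 1) (by omega), Nat.add_sub_cancel]
  ring

theorem poa_closedForm_succ (n : ℕ) (hn : 1 ≤ n) :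
    7 * (2 : ℤ) ^ (2 * (n + 1) - 1) - 21 * 2 ^ (n + 1 - 1) + 10
      = 4 * (7 * 2 ^ (2 * n - 1) - 21 * 2 ^ (n - 1) + 10) + 3 * (7 * 2 ^ n - 10) := by
  obtain ⟨m, rfl⟩ := Nat.exists_eq_add_of_le' hn
  rw [show 2 * (m + 1 + 1) - 1 = 2 * m + 1 + 2 by omega, show 2 * (m + 1) - 1 = 2 * m + 1 by omega,
    Nat.add_sub_cancel, Nat.add_sub_cancel]
  ring

/-- The POA gate-count recurrence `p(2) = 8`,
`p(n) = 4·(p(n−1) + (2^(n−1) − 2)) + 5·(2^(n−1) − 1) + 1 − 2·(2^(n−1) − 1)` for `n ≥ 3`,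
has the closed form `3·p(n) = 7·2^(2n−1) − 21·2^(n−1) + 10` for all `n ≥ 2`. -/
theorem poa_closed_form (p : ℕ → ℤ) (h2 : p 2 = 8)
    (hrec : ∀ n : ℕ, 3 ≤ n →
      p n = 4 * (p (n - 1) + ((2 : ℤ) ^ (n - 1) - 2)) + 5 * ((2 : ℤ) ^ (n - 1) - 1) + 1
        - 2 * ((2 : ℤ) ^ (n - 1) - 1)) :
    ∀ n : ℕ, 2 ≤ n →
      3 * p n = 7 * (2 : ℤ) ^ (2 * n - 1) - 21 * (2 : ℤ) ^ (n - 1) + 10 := by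
  refine eq_of_affine_recurrence (u := fun n ↦ 3 * p n) (a := 4) (b := fun n ↦ 3 * (7 * 2 ^ n - 10))
    (fun n hn ↦ ?_) (fun n hn ↦ poa_closedForm_succ n (by omega)) (by norm_num [h2])
  simp only [poa_recurrence_simplified p hrec n hn]
  ring
end

section
/- For every natural number n ≥ 3, the inequality 7·2^(2n−1) − 21·2^(n−1) + 10 < 3·((n − 1)·2^(2n−1) − 2^(n−1) + 2) holds; that is, the POA gate count (7·2^(2n−1) − 21·2^(n−1) + 10)/3 is strictly smaller than the conventional gate count with cancellation (n − 1)·2^(2n−1) − 2^(n−1) + 2. -/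
/-! With `N = 2^(n-1)` we have `2^(2n-1) = 2N²`, and the gap between the two sides is
`(6n - 20)N² + 18N - 4`. Its leading coefficient is nonnegative once `n ≥ 4`, and for `n = 3`
(`N = 4`) it equals `36`. -/

theorem pow_two_mul_sub_one {M : Type*} [Monoid M] (a : M) {n : ℕ} (hn : 1 ≤ n) :
    a ^ (2 * n - 1) = a * (a ^ (n - 1)) ^ 2 := by
  obtain ⟨k, rfl⟩ : ∃ k, n = k + 1 := ⟨n - 1, by omega⟩
  rw [show 2 * (k + 1) - 1 = 2 * k + 1 by omega, pow_succ', Nat.add_sub_cancel, ← pow_mul,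
    mul_comm k]

theorem gate_count_gap_pos {n : ℕ} (hn : 3 ≤ n) :
    0 < (6 * (n : ℤ) - 20) * ((2 : ℤ) ^ (n - 1)) ^ 2 + 18 * (2 : ℤ) ^ (n - 1) - 4 := by
  obtain rfl | hn4 := hn.eq_or_lt
  · norm_num
  have hN : (1 : ℤ) ≤ 2 ^ (n - 1) := one_le_pow₀ (by norm_num)
  have hcoeff : (0 : ℤ) ≤ 6 * n - 20 := by omega
  have := mul_nonneg hcoeff (sq_nonneg ((2 : ℤ) ^ (n - 1)))
  linarith

/-- For every `n ≥ 3`, `7·2^(2n−1) − 21·2^(n−1) + 10 < 3·((n−1)·2^(2n−1) − 2^(n−1) + 2)`: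
the POA gate count is strictly smaller than the conventional gate count with
cancellation. -/
theorem poa_lt_conventional (n : ℕ) (hn : 3 ≤ n) :
    7 * (2 : ℤ) ^ (2 * n - 1) - 21 * (2 : ℤ) ^ (n - 1) + 10
      < 3 * (((n : ℤ) - 1) * (2 : ℤ) ^ (2 * n - 1) - (2 : ℤ) ^ (n - 1) + 2) := by
  rw [pow_two_mul_sub_one 2 (by omega)]
  linear_combination gate_count_gap_pos hn
end
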